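/- Let j be a positive integer, b_{2j}(z) = (2j/π) · conj(z)^{2j-1} / z^{2j+1}, and Q_0 = [-1,1] × [-1,1] ⊂ ℂ. Then p.v. ∫_{Q_0} b_{2j}(w) dw = ∫_{Q_0 \ D(0,1)} b_{2j}(w) dw, and this quantity is nonzero. -/

import Mathlib

/-!
In polar coordinates `b2j j (r e^{iθ}) = (2j/π) e^{-4ijθ} / r²`, so over a region whose ray in
direction `θ` meets it in `[a θ, b θ]` the integral of `b2j j` is
`(2j/π) ∫ e^{-4ijθ} log (b θ / a θ) dθ`. For an annulus the logarithm does not depend on `θ`, so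
the integral vanishes and the truncated integrals are constant for `ε ≤ 1`. For `Q₀ \ D(0,1)` the
ray meets it in `[1, 1 / max (|cos θ|, |sin θ|)]`; by the symmetries of the square the angular
integral is `4 ∫_{-π/4}^{π/4} cos (4jθ) (-log cos θ) dθ`, and integrating by parts with
`sin (4jθ) tan θ = 2 ∑_{m<j} (cos (4m+2)θ - cos (4m+4)θ) - 1 + cos 4jθ` gives
`∫_{Q₀ \ D(0,1)} b2j j = 1 - (4/π) ∑_{m<j} (-1)^m / (2m+1)`, which is nonzero since `π` is
irrational.
-/

open MeasureTheory Filter Complex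

/-- The kernel of the `2j`-th iterate of the Beurling transform. -/
noncomputable def b2j (j : ℕ) (z : ℂ) : ℂ :=
  ((2 * j : ℂ) / Real.pi) * (starRingEnd ℂ z) ^ (2 * j - 1) / z ^ (2 * j + 1)

open Set Metric
open scoped Real ENNReal

section PolarCoord

variable {E : Type*} [NormedAddCommGroup E] [NormedSpace ℝ E] {f : ℂ → E}

theorem Complex.integrableOn_Ioi_prod_Ioo_of_integrable (hfm : StronglyMeasurable f)
    (hf : Integrable f) :
    IntegrableOn (fun p : ℝ × ℝ => p.1 • f (Complex.polarCoord.symm p))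
      (Ioi 0 ×ˢ Ioo (-π) π) := by
  have hpolar : Measurable Complex.polarCoord.symm :=
    measurableEquivRealProd.symm.measurable.comp continuous_polarCoord_symm.measurable
  refine ⟨(measurable_fst.stronglyMeasurable.smul
    (hfm.comp_measurable hpolar)).aestronglyMeasurable, ?_⟩
  rw [hasFiniteIntegral_iff_enorm]
  calc ∫⁻ p in Ioi 0 ×ˢ Ioo (-π) π, ‖p.1 • f (Complex.polarCoord.symm p)‖ₑ
      = ∫⁻ p in Ioi 0 ×ˢ Ioo (-π) π, ENNReal.ofReal p.1 • ‖f (Complex.polarCoord.symm p)‖ₑ := by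
        refine setLIntegral_congr_fun (measurableSet_Ioi.prod measurableSet_Ioo) fun p hp => ?_
        rw [enorm_smul, Real.enorm_eq_ofReal hp.1.le, smul_eq_mul]
    _ = ∫⁻ z, ‖f z‖ₑ := Complex.lintegral_comp_polarCoord_symm fun z => ‖f z‖ₑ
    _ < ∞ := hf.hasFiniteIntegral

theorem Complex.integral_eq_intervalIntegral_integral_polarCoord_symm (hfm : StronglyMeasurable f)
    (hf : Integrable f) :
    ∫ z, f z = ∫ θ in -π..π, ∫ r in Ioi 0, r • f (Complex.polarCoord.symm (r, θ)) := by
  have hint := Complex.integrableOn_Ioi_prod_Ioo_of_integrable hfm hf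
  rw [IntegrableOn, Measure.volume_eq_prod, ← Measure.prod_restrict] at hint
  rw [← Complex.integral_comp_polarCoord_symm, polarCoord_target, Measure.volume_eq_prod,
    ← Measure.prod_restrict, integral_prod_symm _ hint,
    intervalIntegral.integral_of_le (by linarith [Real.pi_pos]), integral_Ioc_eq_integral_Ioo]

end PolarCoord

theorem continuousOn_b2j (j : ℕ) : ContinuousOn (b2j j) {0}ᶜ :=
  (continuous_const.mul (continuous_conj.pow _)).continuousOn.div (continuous_pow _).continuousOn
    fun _ hz => pow_ne_zero _ hz

theorem measurable_b2j (j : ℕ) : Measurable (b2j j) := by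
  unfold b2j; fun_prop

theorem integrableOn_b2j {j : ℕ} {S : Set ℂ} {ε R : ℝ} (hε : 0 < ε)
    (hS : S ⊆ closedBall 0 R \ ball 0 ε) : IntegrableOn (b2j j) S :=
  (((continuousOn_b2j j).mono fun z hz => by rintro rfl; exact hz.2 (mem_ball_self hε))
    |>.integrableOn_compact ((isCompact_closedBall 0 R).diff isOpen_ball)).mono_set hS

theorem b2j_polarCoord_symm {j : ℕ} (hj : 0 < j) {r : ℝ} (hr : 0 < r) (θ : ℝ) :
    b2j j (Complex.polarCoord.symm (r, θ)) =
      (2 * j / π) * cexp (-(4 * j * θ) * I) / (r : ℂ) ^ 2 := by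
  obtain ⟨n, rfl⟩ : ∃ n, j = n + 1 := ⟨j - 1, by omega⟩
  have hr' : (r : ℂ) ≠ 0 := by exact_mod_cast hr.ne'
  have hpolar : Complex.polarCoord.symm (r, θ) = r * cexp (θ * I) := by
    simp [Complex.exp_mul_I]
  have hconj : starRingEnd ℂ (r * cexp (θ * I)) = r * cexp (-(θ * I)) := by
    rw [map_mul, ← Complex.exp_conj]; simp
  rw [hpolar, b2j, hconj, show 2 * (n + 1) - 1 = 2 * n + 1 by omega, mul_pow, mul_pow,
    ← Complex.exp_nat_mul, ← Complex.exp_nat_mul, div_eq_div_iff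
    (mul_ne_zero (pow_ne_zero _ hr') (Complex.exp_ne_zero _)) (pow_ne_zero _ hr'),
    show (r : ℂ) ^ (2 * (n + 1) + 1) = r ^ (2 * n + 1) * r ^ 2 by ring]
  have hexp : cexp (-(4 * ((n + 1 : ℕ) : ℂ) * θ) * I) *
      cexp (((2 * (n + 1) + 1 : ℕ) : ℂ) * (θ * I)) = cexp (((2 * n + 1 : ℕ) : ℂ) * -(θ * I)) := by
    rw [← Complex.exp_add]; congr 1; push_cast; ring
  linear_combination -(2 * ((n + 1 : ℕ) : ℂ) / π * (r : ℂ) ^ (2 * n + 1) * r ^ 2) * hexp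

theorem setIntegral_b2j_eq_intervalIntegral {j : ℕ} (hj : 0 < j) {S : Set ℂ} {ε R : ℝ}
    (hSm : MeasurableSet S) (hε : 0 < ε) (hS : S ⊆ closedBall 0 R \ ball 0 ε) :
    ∫ w in S, b2j j w = 2 * j / π * ∫ θ in -π..π, cexp (-(4 * j * θ) * I) *
      ((∫ r in Ioi 0 ∩ (fun r : ℝ => Complex.polarCoord.symm (r, θ)) ⁻¹' S, r⁻¹ : ℝ) : ℂ) := by
  rw [← integral_indicator hSm, Complex.integral_eq_intervalIntegral_integral_polarCoord_symm
      ((measurable_b2j j).indicator hSm).stronglyMeasurable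
      ((integrable_indicator_iff hSm).2 (integrableOn_b2j hε hS)),
    ← intervalIntegral.integral_const_mul]
  refine intervalIntegral.integral_congr fun θ _ => ?_
  have hsec : MeasurableSet ((fun r : ℝ => Complex.polarCoord.symm (r, θ)) ⁻¹' S) :=
    hSm.preimage (by simp only [Complex.polarCoord_symm_apply]; fun_prop)
  rw [← integral_complex_ofReal, ← integral_const_mul, ← integral_const_mul,
    ← setIntegral_indicator hsec]
  refine setIntegral_congr_fun measurableSet_Ioi fun r (hr : 0 < r) => ?_
  by_cases hrS : Complex.polarCoord.symm (r, θ) ∈ S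
  · rw [indicator_of_mem hrS, indicator_of_mem (show r ∈ _ from hrS), b2j_polarCoord_symm hj hr,
      Complex.real_smul, ofReal_inv]
    field_simp
  · rw [indicator_of_notMem hrS, indicator_of_notMem (show r ∉ _ from hrS), smul_zero]

theorem intervalIntegral_cexp_neg_four_mul {j : ℕ} (hj : 0 < j) :
    ∫ θ in -π..π, cexp (-(4 * j * θ) * I) = 0 := by
  have hc : -(4 * j * I) ≠ 0 := by simp [hj.ne']
  have hπ : cexp (-(4 * j * I) * π) = 1 := by
    rw [show -(4 * j * I) * π = (-(2 * j) : ℤ) * (2 * π * I) by push_cast; ring]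
    exact Complex.exp_int_mul_two_pi_mul_I _
  have hnegπ : cexp (-(4 * j * I) * ↑(-π)) = 1 := by
    rw [show -(4 * j * I) * ↑(-π) = (2 * j : ℤ) * (2 * π * I) by push_cast; ring]
    exact Complex.exp_int_mul_two_pi_mul_I _
  simp_rw [show ∀ θ : ℝ, -(4 * j * θ) * I = -(4 * j * I) * θ from fun θ => by ring]
  rw [integral_exp_mul_complex hc, hπ, hnegπ, sub_self, zero_div]

theorem setIntegral_b2j_annulus {j : ℕ} (hj : 0 < j) {ε : ℝ} (hε : 0 < ε) (R : ℝ) :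
    ∫ w in ball 0 R \ ball 0 ε, b2j j w = 0 := by
  have hsec (θ : ℝ) : (fun r : ℝ => Complex.polarCoord.symm (r, θ)) ⁻¹' (ball 0 R \ ball 0 ε) =
      {r | ε ≤ |r| ∧ |r| < R} := by
    ext r
    simp only [mem_preimage, Set.mem_sdiff, mem_ball, dist_zero_right,
      Complex.norm_polarCoord_symm, not_lt, mem_ofPred_eq]
    tauto
  rw [setIntegral_b2j_eq_intervalIntegral hj (measurableSet_ball.diff measurableSet_ball) hε
    (sdiff_subset_sdiff_left ball_subset_closedBall)]
  simp_rw [hsec, intervalIntegral.integral_mul_const, intervalIntegral_cexp_neg_four_mul hj,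
    zero_mul, mul_zero]

theorem setIntegral_b2j_sdiff_ball_eq {j : ℕ} (hj : 0 < j) {S : Set ℂ} {ε R : ℝ}
    (hSR : S ⊆ closedBall 0 R) (hball : ball 0 1 ⊆ S) (hε : 0 < ε) (hε1 : ε ≤ 1) :
    ∫ w in S \ ball 0 ε, b2j j w = ∫ w in S \ ball 0 1, b2j j w := by
  rw [← sdiff_union_sdiff_cancel hball (ball_subset_ball hε1),
    setIntegral_union (disjoint_sdiff_left.mono_right sdiff_subset)
      (measurableSet_ball.diff measurableSet_ball)
      (integrableOn_b2j one_pos (sdiff_subset_sdiff_left hSR))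
      (integrableOn_b2j hε (sdiff_subset_sdiff_left ball_subset_closedBall)),
    setIntegral_b2j_annulus hj hε, add_zero]

def closedSquare : Set ℂ := {w | |w.re| ≤ 1 ∧ |w.im| ≤ 1}

theorem measurableSet_closedSquare : MeasurableSet closedSquare := by
  unfold closedSquare
  measurability

theorem closedSquare_subset_closedBall : closedSquare ⊆ closedBall 0 2 := fun z hz => by
  rw [mem_closedBall, dist_zero_right]
  linarith [Complex.norm_le_abs_re_add_abs_im z, hz.1, hz.2]

theorem ball_subset_closedSquare : ball 0 1 ⊆ closedSquare := fun z hz => by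
  rw [mem_ball, dist_zero_right] at hz
  exact ⟨(abs_re_le_norm z).trans hz.le, (abs_im_le_norm z).trans hz.le⟩

/-- The distance from `0` to the boundary of `closedSquare` in the direction `θ`. -/
noncomputable def squareRadius (θ : ℝ) : ℝ := (max |Real.cos θ| |Real.sin θ|)⁻¹

theorem max_abs_cos_abs_sin_pos (θ : ℝ) : 0 < max |Real.cos θ| |Real.sin θ| := by
  by_contra! h
  have hcos : Real.cos θ = 0 := abs_nonpos_iff.1 ((le_max_left _ _).trans h)
  have hsin : Real.sin θ = 0 := abs_nonpos_iff.1 ((le_max_right _ _).trans h)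
  simpa [hcos, hsin] using Real.sin_sq_add_cos_sq θ

theorem le_squareRadius_iff {r : ℝ} (hr : 0 ≤ r) (θ : ℝ) :
    r ≤ squareRadius θ ↔ r * |Real.cos θ| ≤ 1 ∧ r * |Real.sin θ| ≤ 1 := by
  rw [squareRadius, ← one_div, le_div_iff₀ (max_abs_cos_abs_sin_pos θ),
    mul_max_of_nonneg _ _ hr, max_le_iff]

theorem one_le_squareRadius (θ : ℝ) : 1 ≤ squareRadius θ :=
  (one_le_inv₀ (max_abs_cos_abs_sin_pos θ)).2
    (max_le (Real.abs_cos_le_one θ) (Real.abs_sin_le_one θ))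

theorem continuous_squareRadius : Continuous squareRadius :=
  (Real.continuous_cos.abs.max Real.continuous_sin.abs).inv₀ fun θ =>
    (max_abs_cos_abs_sin_pos θ).ne'

theorem squareRadius_neg (θ : ℝ) : squareRadius (-θ) = squareRadius θ := by
  simp [squareRadius]

theorem squareRadius_periodic : Function.Periodic squareRadius (π / 2) := fun θ => by
  simp [squareRadius, Real.cos_add_pi_div_two, Real.sin_add_pi_div_two, max_comm]

theorem squareRadius_eq_inv_cos {θ : ℝ} (hθ : θ ∈ Icc (-(π / 4)) (π / 4)) :
    squareRadius θ = (Real.cos θ)⁻¹ := by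
  have habs : |θ| ≤ π / 4 := abs_le.2 hθ
  have hcos : Real.cos (π / 4) ≤ Real.cos θ := by
    rw [← Real.cos_abs θ]
    exact Real.cos_le_cos_of_nonneg_of_le_pi (abs_nonneg θ) (by linarith [Real.pi_pos]) habs
  have hsin : |Real.sin θ| ≤ Real.sin (π / 4) := by
    rw [Real.abs_sin_eq_sin_abs_of_abs_le_pi (by linarith [Real.pi_pos])]
    exact Real.sin_le_sin_of_le_of_le_pi_div_two (by linarith [abs_nonneg θ])
      (by linarith [Real.pi_pos]) habs
  rw [Real.cos_pi_div_four, ← Real.sin_pi_div_four] at hcos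
  rw [squareRadius, abs_of_nonneg ((abs_nonneg _).trans (hsin.trans hcos)),
    max_eq_left (hsin.trans hcos)]

theorem Ioi_inter_preimage_polarCoord_symm_closedSquare_sdiff_ball (θ : ℝ) :
    Ioi 0 ∩ (fun r : ℝ => Complex.polarCoord.symm (r, θ)) ⁻¹' (closedSquare \ ball 0 1) =
      Icc 1 (squareRadius θ) := by
  have hre (r : ℝ) : (Complex.polarCoord.symm (r, θ)).re = r * Real.cos θ := by
    simp [cos_ofReal_re]
  have him (r : ℝ) : (Complex.polarCoord.symm (r, θ)).im = r * Real.sin θ := by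
    simp [sin_ofReal_re]
  ext r
  simp only [closedSquare, mem_inter_iff, mem_Ioi, mem_preimage, Set.mem_sdiff, mem_ofPred_eq,
    mem_ball, dist_zero_right, Complex.norm_polarCoord_symm, not_lt, mem_Icc, hre, him, abs_mul]
  constructor
  · rintro ⟨hr, hbound, h1⟩
    rw [abs_of_pos hr] at hbound h1
    exact ⟨h1, (le_squareRadius_iff hr.le θ).2 hbound⟩
  · rintro ⟨h1, h2⟩
    have hr := zero_lt_one.trans_le h1
    rw [abs_of_pos hr]
    exact ⟨hr, (le_squareRadius_iff hr.le θ).1 h2, h1⟩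

theorem setIntegral_inv_Icc_one {a : ℝ} (ha : 1 ≤ a) : ∫ r in Icc 1 a, r⁻¹ = Real.log a := by
  rw [integral_Icc_eq_integral_Ioc, ← intervalIntegral.integral_of_le ha,
    integral_inv_of_pos one_pos (by linarith), div_one]

section TrigonometricIntegral

open Finset

theorem sin_mul_sin_four_mul (j : ℕ) (θ : ℝ) :
    Real.sin θ * Real.sin (4 * j * θ) = Real.cos θ * (2 * ∑ m ∈ range j,
      (Real.cos ((4 * m + 2) * θ) - Real.cos ((4 * m + 4) * θ)) - 1 + Real.cos (4 * j * θ)) := by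
  induction j with
  | zero => simp
  | succ n ih =>
    set x := 4 * (n : ℝ) * θ
    have hsin :
        Real.sin (x + 4 * θ) - Real.sin x = 2 * Real.sin (2 * θ) * Real.cos (x + 2 * θ) := by
      rw [Real.sin_sub_sin]; ring_nf
    have hcos :
        Real.cos (x + 4 * θ) + Real.cos x = 2 * Real.cos (x + 2 * θ) * Real.cos (2 * θ) := by
      rw [Real.cos_add_cos]; ring_nf
    rw [sum_range_succ, show 4 * ((n + 1 : ℕ) : ℝ) * θ = x + 4 * θ by push_cast; ring,
      show (4 * (n : ℝ) + 2) * θ = x + 2 * θ by ring,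
      show (4 * (n : ℝ) + 4) * θ = x + 4 * θ by ring]
    linear_combination ih + Real.sin θ * hsin + Real.cos θ * hcos
      + 2 * Real.cos θ * Real.cos (x + 2 * θ) * Real.cos_two_mul θ
      + 4 * Real.cos θ * Real.cos (x + 2 * θ) * Real.sin_sq_add_cos_sq θ
      + 2 * Real.sin θ * Real.cos (x + 2 * θ) * Real.sin_two_mul θ

theorem hasDerivAt_sin_mul_div {k : ℝ} (hk : k ≠ 0) (θ : ℝ) :
    HasDerivAt (fun x => Real.sin (k * x) / k) (Real.cos (k * θ)) θ := by
  refine (((hasDerivAt_id' θ).const_mul k).sin.div_const k).congr_deriv ?_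
  field_simp

/-- A primitive of `θ ↦ sin (4 j θ) * tan θ`, by `sin_mul_sin_four_mul`. -/
noncomputable def tanMulSinPrimitive (j : ℕ) (θ : ℝ) : ℝ :=
  2 * ∑ m ∈ range j, (Real.sin ((4 * m + 2) * θ) / (4 * m + 2) -
    Real.sin ((4 * m + 4) * θ) / (4 * m + 4)) - θ + Real.sin (4 * j * θ) / (4 * j)

theorem hasDerivAt_tanMulSinPrimitive {j : ℕ} (hj : 0 < j) (θ : ℝ) :
    HasDerivAt (tanMulSinPrimitive j) (2 * ∑ m ∈ range j,
      (Real.cos ((4 * m + 2) * θ) - Real.cos ((4 * m + 4) * θ)) - 1 + Real.cos (4 * j * θ)) θ := by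
  have hsum : HasDerivAt (fun x => ∑ m ∈ range j, (Real.sin ((4 * m + 2) * x) / (4 * m + 2) -
      Real.sin ((4 * m + 4) * x) / (4 * m + 4)))
      (∑ m ∈ range j, (Real.cos ((4 * m + 2) * θ) - Real.cos ((4 * m + 4) * θ))) θ :=
    HasDerivAt.fun_sum fun m _ =>
      (hasDerivAt_sin_mul_div (by positivity) θ).sub (hasDerivAt_sin_mul_div (by positivity) θ)
  exact ((hsum.const_mul 2).sub (hasDerivAt_id θ)).add
    (hasDerivAt_sin_mul_div (by positivity) θ)

theorem tanMulSinPrimitive_neg (j : ℕ) (θ : ℝ) :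
    tanMulSinPrimitive j (-θ) = -tanMulSinPrimitive j θ := by
  simp only [tanMulSinPrimitive, mul_neg, Real.sin_neg, neg_div, neg_sub_neg,
    Finset.sum_sub_distrib]
  ring

theorem tanMulSinPrimitive_pi_div_four (j : ℕ) :
    tanMulSinPrimitive j (π / 4) = ∑ m ∈ range j, (-1 : ℝ) ^ m / (2 * m + 1) - π / 4 := by
  have hsin_odd (m : ℕ) : Real.sin ((4 * m + 2) * (π / 4)) = (-1) ^ m := by
    rw [show (4 * m + 2) * (π / 4) = m * π + π / 2 by ring, Real.sin_add_pi_div_two,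
      Real.cos_nat_mul_pi]
  have hsin_even (m : ℕ) : Real.sin (4 * m * (π / 4)) = 0 := by
    rw [show 4 * m * (π / 4) = m * π by ring, Real.sin_nat_mul_pi]
  have hsin_even' (m : ℕ) : Real.sin ((4 * m + 4) * (π / 4)) = 0 := by
    simpa [mul_add] using hsin_even (m + 1)
  simp only [tanMulSinPrimitive, hsin_odd, hsin_even, hsin_even', zero_div, sub_zero, add_zero,
    mul_sum]
  congr 1
  refine sum_congr rfl fun m _ => ?_
  field_simp
  ring

theorem intervalIntegral_cos_mul_neg_log_cos {j : ℕ} (hj : 0 < j) :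
    ∫ θ in -(π / 4)..π / 4, Real.cos (4 * j * θ) * -Real.log (Real.cos θ) =
      (π / 4 - ∑ m ∈ range j, (-1 : ℝ) ^ m / (2 * m + 1)) / (2 * j) := by
  have hcos {θ : ℝ} (hθ : θ ∈ uIcc (-(π / 4)) (π / 4)) : 0 < Real.cos θ := by
    rw [Set.uIcc_of_le (by linarith [Real.pi_pos])] at hθ
    exact Real.cos_pos_of_mem_Ioo ⟨by linarith [hθ.1, Real.pi_pos],
      by linarith [hθ.2, Real.pi_pos]⟩
  -- integration by parts, with `(-log ∘ cos)' = tan`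
  have hderiv (θ : ℝ) (hθ : θ ∈ uIcc (-(π / 4)) (π / 4)) : HasDerivAt
      (fun x => -(Real.sin (4 * j * x) * Real.log (Real.cos x) + tanMulSinPrimitive j x) / (4 * j))
      (Real.cos (4 * j * θ) * -Real.log (Real.cos θ)) θ := by
    have hsin := ((hasDerivAt_id' θ).const_mul (4 * j : ℝ)).sin
    have hlog := (Real.hasDerivAt_cos θ).log (hcos hθ).ne'
    refine ((((hsin.mul hlog).add (hasDerivAt_tanMulSinPrimitive hj θ)).neg).div_const
      (4 * j : ℝ)).congr_deriv ?_
    have htan : Real.sin (4 * j * θ) * (-Real.sin θ / Real.cos θ) = -(2 * ∑ m ∈ range j,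
        (Real.cos ((4 * m + 2) * θ) - Real.cos ((4 * m + 4) * θ)) - 1 + Real.cos (4 * j * θ)) := by
      rw [mul_div_assoc', mul_neg, mul_comm, sin_mul_sin_four_mul, neg_div,
        mul_div_cancel_left₀ _ (hcos hθ).ne']
    rw [htan, neg_add_cancel_right]
    field_simp
  have hint : IntervalIntegrable (fun θ => Real.cos (4 * j * θ) * -Real.log (Real.cos θ))
      volume (-(π / 4)) (π / 4) :=
    ContinuousOn.intervalIntegrable fun θ hθ => ContinuousAt.continuousWithinAt <|
      (by fun_prop : Continuous fun θ : ℝ => Real.cos (4 * j * θ)).continuousAt.mul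
        ((Real.continuousAt_log (hcos hθ).ne').comp Real.continuous_cos.continuousAt).neg
  have hsin_quarter : Real.sin (4 * j * (π / 4)) = 0 := by
    rw [show 4 * j * (π / 4) = j * π by ring, Real.sin_nat_mul_pi]
  rw [intervalIntegral.integral_eq_sub_of_hasDerivAt hderiv hint, mul_neg, Real.sin_neg,
    hsin_quarter, tanMulSinPrimitive_neg, tanMulSinPrimitive_pi_div_four]
  field_simp
  ring

end TrigonometricIntegral

theorem intervalIntegral_cexp_neg_mul_I_mul_of_even {g : ℝ → ℝ} (hg : Continuous g)
    (heven : ∀ x, g (-x) = g x) (k a : ℝ) :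
    ∫ x in -a..a, cexp (-(k * x) * I) * g x = ((∫ x in -a..a, Real.cos (k * x) * g x : ℝ) : ℂ) := by
  have hodd : ∫ x in -a..a, Real.sin (k * x) * g x = 0 := by
    have h := intervalIntegral.integral_comp_neg (a := -a) (b := a)
      fun x => Real.sin (k * x) * g x
    simp only [neg_neg, mul_neg, Real.sin_neg, heven, neg_mul, intervalIntegral.integral_neg] at h
    linarith
  have hsplit (x : ℝ) : cexp (-(k * x) * I) * g x =
      ((Real.cos (k * x) * g x : ℝ) : ℂ) - ((Real.sin (k * x) * g x : ℝ) : ℂ) * I := by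
    rw [← ofReal_mul, ← ofReal_neg, Complex.exp_mul_I, ← ofReal_cos, ← ofReal_sin, Real.cos_neg,
      Real.sin_neg]
    push_cast; ring
  simp_rw [hsplit]
  rw [intervalIntegral.integral_sub, intervalIntegral.integral_mul_const,
    intervalIntegral.integral_ofReal, intervalIntegral.integral_ofReal, hodd, ofReal_zero,
    zero_mul, sub_zero]
  all_goals exact Continuous.intervalIntegrable (by fun_prop) _ _

theorem intervalIntegral_cos_mul_log_squareRadius (j : ℕ) :
    ∫ θ in -π..π, Real.cos (4 * j * θ) * Real.log (squareRadius θ) =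
      4 * ∫ θ in -(π / 4)..π / 4, Real.cos (4 * j * θ) * -Real.log (Real.cos θ) := by
  set h : ℝ → ℝ := fun θ => Real.cos (4 * j * θ) * Real.log (squareRadius θ)
  have hcont : Continuous h := by
    have := continuous_squareRadius.log fun θ =>
      (zero_lt_one.trans_le (one_le_squareRadius θ)).ne'
    fun_prop
  have hper : Function.Periodic h (π / 2) := fun θ => by
    simp only [h, squareRadius_periodic θ,
      show 4 * (j : ℝ) * (θ + π / 2) = 4 * j * θ + j * (2 * π) by ring,
      Real.cos_add_nat_mul_two_pi]
  have hquarter : ∫ θ in -(π / 4)..π / 4, h θ =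
      ∫ θ in -(π / 4)..π / 4, Real.cos (4 * j * θ) * -Real.log (Real.cos θ) := by
    refine intervalIntegral.integral_congr fun θ hθ => ?_
    rw [Set.uIcc_of_le (by linarith [Real.pi_pos])] at hθ
    simp only [h, squareRadius_eq_inv_cos hθ, Real.log_inv]
  calc ∫ θ in -π..π, h θ = ∫ θ in -π..-π + (4 : ℤ) • (π / 2), h θ := by
        rw [show -π + (4 : ℤ) • (π / 2) = π by simp; ring]
    _ = 4 * ∫ θ in -(π / 4)..-(π / 4) + π / 2, h θ := by
      rw [hper.intervalIntegral_add_zsmul_eq 4 (-π) fun a b => hcont.intervalIntegrable a b,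
        hper.intervalIntegral_add_eq (-π) (-(π / 4))]
      norm_num
    _ = _ := by rw [← hquarter, show -(π / 4) + π / 2 = π / 4 by ring]

theorem setIntegral_b2j_closedSquare_sdiff_ball {j : ℕ} (hj : 0 < j) :
    ∫ w in closedSquare \ ball 0 1, b2j j w =
      ((1 - 4 / π * ∑ m ∈ Finset.range j, (-1 : ℝ) ^ m / (2 * m + 1) : ℝ) : ℂ) := by
  have hlog : Continuous fun θ => Real.log (squareRadius θ) :=
    continuous_squareRadius.log fun θ => (zero_lt_one.trans_le (one_le_squareRadius θ)).ne'
  have heven := intervalIntegral_cexp_neg_mul_I_mul_of_even hlog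
    (fun θ => by rw [squareRadius_neg]) (4 * j) π
  push_cast at heven
  rw [setIntegral_b2j_eq_intervalIntegral hj (measurableSet_closedSquare.diff measurableSet_ball)
    one_pos (sdiff_subset_sdiff_left closedSquare_subset_closedBall)]
  simp_rw [Ioi_inter_preimage_polarCoord_symm_closedSquare_sdiff_ball,
    setIntegral_inv_Icc_one (one_le_squareRadius _)]
  rw [heven, intervalIntegral_cos_mul_log_squareRadius, intervalIntegral_cos_mul_neg_log_cos hj]
  have hj' : (j : ℝ) ≠ 0 := by positivity
  rw [show 1 - 4 / π * ∑ m ∈ Finset.range j, (-1 : ℝ) ^ m / (2 * m + 1) = 2 * j / π *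
      (4 * ((π / 4 - ∑ m ∈ Finset.range j, (-1 : ℝ) ^ m / (2 * m + 1)) / (2 * j))) by
    field_simp]
  push_cast
  ring

theorem one_sub_four_div_pi_mul_ratCast_ne_zero (q : ℚ) : 1 - 4 / π * q ≠ 0 := by
  intro h
  have hπ : π = ((4 * q : ℚ) : ℝ) := by
    push_cast
    field_simp at h
    linarith
  exact irrational_pi.ne_rat _ hπ

theorem pv_integral_b2j_Q0 (j : ℕ) (hj : 0 < j)
    (Q0 : Set ℂ) (hQ0 : Q0 = {w : ℂ | |w.re| ≤ 1 ∧ |w.im| ≤ 1}) :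
    Tendsto (fun ε : ℝ => ∫ w in Q0 \ Metric.ball 0 ε, b2j j w ∂volume)
        (nhdsWithin 0 (Set.Ioi 0))
        (nhds (∫ w in Q0 \ Metric.ball 0 1, b2j j w ∂volume)) ∧
      (∫ w in Q0 \ Metric.ball 0 1, b2j j w ∂volume) ≠ 0 := by
  obtain rfl : Q0 = closedSquare := hQ0
  refine ⟨tendsto_const_nhds.congr' ?_, ?_⟩
  · filter_upwards [Ioc_mem_nhdsGT one_pos] with ε ⟨hε, hε1⟩
    exact (setIntegral_b2j_sdiff_ball_eq hj closedSquare_subset_closedBall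
      ball_subset_closedSquare hε hε1).symm
  · rw [setIntegral_b2j_closedSquare_sdiff_ball hj, ofReal_ne_zero]
    simpa using one_sub_four_div_pi_mul_ratCast_ne_zero
      (∑ m ∈ Finset.range j, (-1 : ℚ) ^ m / (2 * m + 1))
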